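/- Let Ψ : ℝ^{N-1} → ℝ be L-Lipschitz. Then the strict epigraph E_Ψ is a Lip_α-extension domain for each α ∈ (0,1): there exists a constant C_D (depending on L and α) such that any two points x, y ∈ E_Ψ can be joined by a rectifiable curve γ ⊂ E_Ψ with ∫_γ dist(z, ∂E_Ψ)^{α−1}|dz| ≤ C_D|x − y|^α. -/

import Mathlib

open Metric Set MeasureTheory Filter

noncomputable section

/-- `Euc n` is Euclidean space `ℝ^n`. -/
abbrev Euc (n : ℕ) := EuclideanSpace ℝ (Fin n)

/-- A function is harmonic on a set if it is `C²` there and its Laplacian vanishes. -/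
def HarmonicOnSet {m : ℕ} (f : Euc m → ℝ) (s : Set (Euc m)) : Prop :=
  ContDiffOn ℝ 2 f s ∧ ∀ x ∈ s,
    ∑ i : Fin m, fderiv ℝ (fun y => fderiv ℝ f y (EuclideanSpace.single i 1)) x
      (EuclideanSpace.single i 1) = 0

/-- The constant `K_N = 2 m_{N-1}(B^{N-1}) / m_N(B^N)` (here `N = n+1`). -/
def Kconst (n : ℕ) : ℝ :=
  2 * (volume (ball (0 : Euc n) 1)).toReal / (volume (ball (0 : Euc (n+1)) 1)).toReal

/-- the projection of `ℝ^{n+1}` onto the first `n` coordinates -/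
def proj {n : ℕ} (x : Euc (n+1)) : Euc n := WithLp.toLp 2 (fun i : Fin n => x i.castSucc)

/-- the last standard basis vector `e_N` in `ℝ^{n+1}` -/
def eN (n : ℕ) : Euc (n+1) := EuclideanSpace.single (Fin.last n) 1

/-- the strict epigraph of `Ψ : ℝ^n → ℝ` -/
def epigraph {n : ℕ} (Ψ : Euc n → ℝ) : Set (Euc (n+1)) :=
  {x | Ψ (proj x) < x (Fin.last n)}

/-- the point obtained from `x` by replacing its last coordinate with `t` -/
def vmove {n : ℕ} (x : Euc (n+1)) (t : ℝ) : Euc (n+1) :=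
  x + (t - x (Fin.last n)) • eN n

/-- the vertical Hölder condition of order `α` with constant `C` -/
def VertHolder {n : ℕ} (Ψ : Euc n → ℝ) (U : Euc (n+1) → ℝ) (C α : ℝ) : Prop :=
  ∀ x ∈ epigraph Ψ, ∀ t : ℝ, Ψ (proj x) < t →
    |U x - U (vmove x t)| ≤ C * |x (Fin.last n) - t| ^ α

/-!
Go up from `x` by `H = (1 + L)|x - y|`, cross to `y + H e_N` parallel to `[x, y]`, and come
down to `y`. The height `z_N - Ψ(z')` above the graph is `(1 + L)`-Lipschitz and nonpositive on
`∂E_Ψ`, so it is at most `(1 + L) dist(z, ∂E_Ψ)`; along the path it exceeds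
`(1 + L)|x - y| min(t, 1 - t)` (on the middle leg because it is positive at both ends). The speed
being `O(|x - y|)`, the weighted length is `O(|x - y|^α ∫₀¹ (t^(α-1) + (1-t)^(α-1)) dt)`.
-/

open NNReal

lemma Real.rpow_min_le_rpow_add_rpow {a b : ℝ} (ha : 0 ≤ a) (hb : 0 ≤ b) (β : ℝ) :
    min a b ^ β ≤ a ^ β + b ^ β := by
  rcases min_cases a b with ⟨h, -⟩ | ⟨h, -⟩ <;> rw [h]
  · linarith [Real.rpow_nonneg hb β]
  · linarith [Real.rpow_nonneg ha β]

lemma Real.rpow_sub_one_mul_le {r s d D c α : ℝ} (hα : α ≤ 1) (hs : 0 < s) (hd : 0 ≤ d)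
    (hc : 0 ≤ c) (hr : d * s ≤ r) (hD₀ : 0 ≤ D) (hD : D ≤ c * d) :
    r ^ (α - 1) * D ≤ c * d ^ α * s ^ (α - 1) := by
  rcases hd.eq_or_lt with rfl | hd
  · rw [le_antisymm (by simpa using hD) hD₀, mul_zero]
    exact mul_nonneg (mul_nonneg hc (by positivity)) (by positivity)
  calc r ^ (α - 1) * D ≤ (d * s) ^ (α - 1) * (c * d) :=
        mul_le_mul (Real.rpow_le_rpow_of_nonpos (by positivity) hr (by linarith)) hD hD₀
          (by positivity)
    _ = c * d ^ α * s ^ (α - 1) := by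
        rw [Real.mul_rpow hd.le hs.le, Real.rpow_sub_one hd.ne']
        field_simp

lemma intervalIntegrable_one_sub_rpow {r : ℝ} (hr : -1 < r) :
    IntervalIntegrable (fun t : ℝ => (1 - t) ^ r) volume 0 1 := by
  simpa using
    ((intervalIntegral.intervalIntegrable_rpow' (a := 0) (b := 1) hr).comp_sub_left 1).symm

lemma integral_rpow_sub_one_add_rpow_sub_one {α : ℝ} (hα : 0 < α) :
    ∫ t in (0 : ℝ)..1, (t ^ (α - 1) + (1 - t) ^ (α - 1)) = 2 / α := by
  have h₁ : ∫ t in (0 : ℝ)..1, t ^ (α - 1) = 1 / α := by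
    rw [integral_rpow (Or.inl (by linarith)), sub_add_cancel, Real.one_rpow,
      Real.zero_rpow hα.ne']
    ring
  have h₂ : ∫ t in (0 : ℝ)..1, (1 - t) ^ (α - 1) = 1 / α := by
    simpa [h₁] using intervalIntegral.integral_comp_sub_left (fun t : ℝ => t ^ (α - 1)) (1 : ℝ)
      (a := 0) (b := 1)
  rw [intervalIntegral.integral_add (intervalIntegral.intervalIntegrable_rpow' (by linarith))
    (intervalIntegrable_one_sub_rpow (by linarith)), h₁, h₂]
  ring

lemma intervalIntegral.integral_mono_on_Ioo_of_nonneg {f g : ℝ → ℝ} {a b : ℝ} (hab : a ≤ b)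
    (hf : ∀ t ∈ Ioo a b, 0 ≤ f t) (hfg : ∀ t ∈ Ioo a b, f t ≤ g t)
    (hg : IntervalIntegrable g volume a b) :
    ∫ t in a..b, f t ≤ ∫ t in a..b, g t := by
  simp only [intervalIntegral.integral_of_le hab, integral_Ioc_eq_integral_Ioo]
  exact setIntegral_mono_of_nonneg hf hfg (hg.1.mono_set Ioo_subset_Ioc_self)

lemma LipschitzWith.neg_mul_dist_div_two_lt_apply_lineMap {E : Type*} [NormedAddCommGroup E]
    [NormedSpace ℝ E] {φ : E → ℝ} {C : ℝ≥0} (hφ : LipschitzWith C φ) {x y : E}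
    (hx : 0 < φ x) (hy : 0 < φ y) {s : ℝ} (hs : s ∈ Icc (0 : ℝ) 1) :
    -(C * dist x y / 2) < φ (AffineMap.lineMap x y s) := by
  have hdx := hφ.dist_le_mul (AffineMap.lineMap x y s) x
  have hdy := hφ.dist_le_mul (AffineMap.lineMap x y s) y
  rw [dist_lineMap_left, Real.norm_of_nonneg hs.1] at hdx
  rw [dist_lineMap_right, Real.norm_of_nonneg (sub_nonneg.2 hs.2)] at hdy
  rw [Real.dist_eq] at hdx hdy
  have hd : 0 ≤ (C : ℝ) * dist x y := by positivity
  rcases le_total s (1 / 2) with h | h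
  · nlinarith [neg_abs_le (φ (AffineMap.lineMap x y s) - φ x)]
  · nlinarith [neg_abs_le (φ (AffineMap.lineMap x y s) - φ y)]

section Detour

variable {E : Type*} [NormedAddCommGroup E] [NormedSpace ℝ E]

-- `detour x y e` climbs from `x` to `x + e`, follows `[x, y] + e` to `y + e` and descends to `y`,
-- spending time `1/3` on each leg.
def detourProgress (t : ℝ) : ℝ := min (max (3 * t - 1) 0) 1

def detourLift (t : ℝ) : ℝ := min (min (3 * t) 1) (3 - 3 * t)

def detour (x y e : E) (t : ℝ) : E := AffineMap.lineMap x y (detourProgress t) + detourLift t • e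

lemma lipschitzWith_detourProgress : LipschitzWith 3 detourProgress := by
  have h : LipschitzWith 3 fun t : ℝ => 3 * t - 1 :=
    LipschitzWith.of_dist_le_mul fun a b => by
      simp [Real.dist_eq, ← mul_sub, abs_mul]
  exact (h.max_const 0).min_const 1

lemma lipschitzWith_detourLift : LipschitzWith 3 detourLift := by
  have h₁ : LipschitzWith 3 fun t : ℝ => 3 * t :=
    LipschitzWith.of_dist_le_mul fun a b => by simp [Real.dist_eq, ← mul_sub, abs_mul]
  have h₂ : LipschitzWith 3 fun t : ℝ => 3 - 3 * t :=
    LipschitzWith.of_dist_le_mul fun a b => by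
      rw [Real.dist_eq, Real.dist_eq, show 3 - 3 * a - (3 - 3 * b) = 3 * (b - a) by ring,
        abs_mul, abs_sub_comm]
      norm_num
  have h := (h₁.min_const 1).min h₂
  rwa [max_self] at h

lemma detour_zero (x y e : E) : detour x y e 0 = x := by
  norm_num [detour, detourProgress, detourLift]

lemma detour_one (x y e : E) : detour x y e 1 = y := by
  norm_num [detour, detourProgress, detourLift]

lemma lipschitzWith_detour (x y e : E) :
    LipschitzWith (3 * (nndist x y + ‖e‖₊)) (detour x y e) := by
  have h := ((lipschitzWith_lineMap x y).comp lipschitzWith_detourProgress).add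
    ((ContinuousLinearMap.toSpanSingleton ℝ e).lipschitz.comp lipschitzWith_detourLift)
  rw [ContinuousLinearMap.nnnorm_toSpanSingleton] at h
  rwa [mul_add, mul_comm (3 : ℝ≥0), mul_comm (3 : ℝ≥0)]

lemma detourProgress_detourLift_cases {t : ℝ} (ht : t ∈ Icc (0 : ℝ) 1) :
    (detourProgress t = 0 ∧ min t (1 - t) ≤ detourLift t) ∨
    (detourProgress t = 1 ∧ min t (1 - t) ≤ detourLift t) ∨
    (detourProgress t ∈ Icc (0 : ℝ) 1 ∧ detourLift t = 1) := by
  obtain ⟨h0, h1⟩ := ht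
  simp only [detourProgress, detourLift, mem_Icc]
  rcases le_total t (1 / 3) with h | h
  · left
    grind
  rcases le_total t (2 / 3) with h' | h'
  · right; right
    grind
  · right; left
    grind

end Detour

section Epigraph

variable {n : ℕ} {Ψ : Euc n → ℝ} {K : ℝ≥0}

def heightAbove (Ψ : Euc n → ℝ) (z : Euc (n+1)) : ℝ := z (Fin.last n) - Ψ (proj z)

lemma mem_epigraph_iff_heightAbove_pos {z : Euc (n+1)} :
    z ∈ epigraph Ψ ↔ 0 < heightAbove Ψ z := by
  rw [heightAbove, sub_pos]
  rfl

lemma heightAbove_add_smul_eN (z : Euc (n+1)) (c : ℝ) :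
    heightAbove Ψ (z + c • eN n) = heightAbove Ψ z + c := by
  have hproj : proj (z + c • eN n) = proj z := by
    ext i
    simp [proj, eN]
  rw [heightAbove, heightAbove, hproj]
  simp only [eN, PiLp.add_apply, PiLp.smul_apply, PiLp.single_eq_same,
    smul_eq_mul, mul_one]
  ring

lemma lipschitzWith_proj : LipschitzWith 1 (proj (n := n)) :=
  LipschitzWith.of_dist_le_mul fun x y => by
    simp only [EuclideanSpace.dist_eq, Fin.sum_univ_castSucc, proj, NNReal.coe_one, one_mul]
    gcongr
    exact le_add_of_nonneg_right (sq_nonneg _)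

lemma lipschitzWith_last : LipschitzWith 1 fun z : Euc (n+1) => z (Fin.last n) :=
  LipschitzWith.of_edist_le fun x y => PiLp.edist_apply_le x y _

lemma lipschitzWith_heightAbove (hΨ : LipschitzWith K Ψ) :
    LipschitzWith (1 + K) (heightAbove Ψ) := by
  have h := lipschitzWith_last.sub (hΨ.comp lipschitzWith_proj)
  rwa [mul_one] at h

lemma isOpen_epigraph (hΨ : Continuous Ψ) : IsOpen (epigraph Ψ) :=
  isOpen_lt (hΨ.comp lipschitzWith_proj.continuous) lipschitzWith_last.continuous

lemma frontier_epigraph_nonempty : (frontier (epigraph Ψ)).Nonempty := by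
  refine nonempty_frontier_iff.2 ⟨⟨(1 - heightAbove Ψ 0) • eN n, ?_⟩, fun h => ?_⟩
  · rw [mem_epigraph_iff_heightAbove_pos, ← zero_add ((1 - heightAbove Ψ 0) • eN n),
      heightAbove_add_smul_eN]
    norm_num
  · have := h ▸ mem_univ ((-heightAbove Ψ 0) • eN n)
    rw [mem_epigraph_iff_heightAbove_pos, ← zero_add ((-heightAbove Ψ 0) • eN n),
      heightAbove_add_smul_eN] at this
    simp at this

lemma heightAbove_le_mul_infDist (hΨ : LipschitzWith K Ψ) (z : Euc (n+1)) :
    heightAbove Ψ z ≤ (1 + K) * infDist z (frontier (epigraph Ψ)) := by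
  have hK : (0 : ℝ) < 1 + K := by positivity
  rw [← div_le_iff₀' hK, le_infDist frontier_epigraph_nonempty]
  intro w hw
  have hw₀ : heightAbove Ψ w ≤ 0 := by
    rw [(isOpen_epigraph hΨ.continuous).frontier_eq] at hw
    exact not_lt.1 (mt mem_epigraph_iff_heightAbove_pos.2 hw.2)
  have hlip := (lipschitzWith_heightAbove hΨ).dist_le_mul z w
  rw [Real.dist_eq] at hlip
  push_cast at hlip
  rw [div_le_iff₀' hK]
  linarith [le_abs_self (heightAbove Ψ z - heightAbove Ψ w)]

lemma heightAbove_detour_gt (hΨ : LipschitzWith K Ψ) {x y : Euc (n+1)} (hx : x ∈ epigraph Ψ)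
    (hy : y ∈ epigraph Ψ) {t : ℝ} (ht : t ∈ Icc (0 : ℝ) 1) :
    (1 + K) * dist x y * min t (1 - t) <
      heightAbove Ψ (detour x y (((1 + K) * dist x y) • eN n) t) := by
  set H := (1 + K) * dist x y
  have hH : 0 ≤ H := by positivity
  rw [mem_epigraph_iff_heightAbove_pos] at hx hy
  rw [detour, smul_smul, heightAbove_add_smul_eN]
  rcases detourProgress_detourLift_cases ht with ⟨hp, hl⟩ | ⟨hp, hl⟩ | ⟨hp, hl⟩
  · rw [hp, AffineMap.lineMap_apply_zero]
    nlinarith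
  · rw [hp, AffineMap.lineMap_apply_one]
    nlinarith
  · have := (lipschitzWith_heightAbove hΨ).neg_mul_dist_div_two_lt_apply_lineMap hx hy hp
    have hmin : min t (1 - t) ≤ 1 / 2 := by
      rw [min_le_iff]
      by_contra! h
      linarith [h.1, h.2]
    push_cast at this
    rw [hl]
    nlinarith

lemma integral_detour_le (hΨ : LipschitzWith K Ψ) {x y : Euc (n+1)} (hx : x ∈ epigraph Ψ)
    (hy : y ∈ epigraph Ψ) {α : ℝ} (hα₀ : 0 < α) (hα₁ : α ≤ 1) :
    ∫ t in (0 : ℝ)..1, infDist (detour x y (((1 + K) * dist x y) • eN n) t)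
        (frontier (epigraph Ψ)) ^ (α - 1) * ‖deriv (detour x y (((1 + K) * dist x y) • eN n)) t‖
      ≤ 6 * (2 + K) / α * dist x y ^ α := by
  set d := dist x y
  set γ := detour x y (((1 + K) * d) • eN n)
  have hc : (0 : ℝ) ≤ 3 * (2 + K) := by positivity
  have hderiv (t : ℝ) : ‖deriv γ t‖ ≤ 3 * (2 + K) * d := by
    refine (norm_deriv_le_of_lipschitz (lipschitzWith_detour _ _ _)).trans_eq ?_
    simp only [NNReal.coe_mul, NNReal.coe_ofNat, NNReal.coe_add, coe_nndist, coe_nnnorm, eN,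
      norm_smul, norm_mul, Real.norm_eq_abs, abs_of_nonneg (by positivity : (0 : ℝ) ≤ 1 + K),
      abs_dist, PiLp.norm_single, norm_one, mul_one, d]
    ring
  have hinfDist {t : ℝ} (ht : t ∈ Ioo (0 : ℝ) 1) :
      d * min t (1 - t) ≤ infDist (γ t) (frontier (epigraph Ψ)) := by
    have h := (heightAbove_detour_gt hΨ hx hy (Ioo_subset_Icc_self ht)).trans_le
      (heightAbove_le_mul_infDist hΨ (γ t))
    rw [mul_assoc] at h
    exact (lt_of_mul_lt_mul_left h (by positivity)).le
  calc _ ≤ ∫ t in (0 : ℝ)..1, 3 * (2 + K) * d ^ α * (t ^ (α - 1) + (1 - t) ^ (α - 1)) := by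
        refine intervalIntegral.integral_mono_on_Ioo_of_nonneg zero_le_one
          (fun t _ => mul_nonneg (Real.rpow_nonneg infDist_nonneg _) (norm_nonneg _))
          (fun t ht => ?_) ((intervalIntegral.intervalIntegrable_rpow' (by linarith)).add
            (intervalIntegrable_one_sub_rpow (by linarith)) |>.const_mul _)
        have hs : 0 < min t (1 - t) := lt_min ht.1 (sub_pos.2 ht.2)
        calc _ ≤ 3 * (2 + K) * d ^ α * min t (1 - t) ^ (α - 1) :=
              Real.rpow_sub_one_mul_le hα₁ hs dist_nonneg hc (hinfDist ht) (norm_nonneg _)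
                (hderiv t)
          _ ≤ _ := by
              gcongr
              exact Real.rpow_min_le_rpow_add_rpow ht.1.le (sub_pos.2 ht.2).le _
    _ = 6 * (2 + K) / α * d ^ α := by
        rw [intervalIntegral.integral_const_mul, integral_rpow_sub_one_add_rpow_sub_one hα₀]
        ring

end Epigraph

/-- The strict epigraph of a Lipschitz function is a `Lip_α`-extension domain. -/
theorem stmt11 {n : ℕ} (L α : ℝ) (hL : 0 ≤ L) (hα : α ∈ Ioo (0:ℝ) 1)
    (Ψ : Euc n → ℝ) (hΨ : ∀ x y, |Ψ x - Ψ y| ≤ L * ‖x - y‖) :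
    ∃ CD : ℝ, ∀ x ∈ epigraph Ψ, ∀ y ∈ epigraph Ψ, ∃ γ : ℝ → Euc (n+1),
      γ 0 = x ∧ γ 1 = y ∧ (∀ t ∈ Icc (0:ℝ) 1, γ t ∈ epigraph Ψ) ∧
      (∃ K : NNReal, LipschitzWith K γ) ∧
      ∫ t in (0:ℝ)..1, infDist (γ t) (frontier (epigraph Ψ)) ^ (α - 1) * ‖deriv γ t‖ ≤
        CD * ‖x - y‖ ^ α := by
  lift L to ℝ≥0 using hL
  have hΨ' : LipschitzWith L Ψ := LipschitzWith.of_dist_le_mul fun x y => by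
    rw [Real.dist_eq, dist_eq_norm]
    exact hΨ x y
  refine ⟨6 * (2 + L) / α, fun x hx y hy => ⟨detour x y (((1 + L) * dist x y) • eN n),
    detour_zero _ _ _, detour_one _ _ _, fun t ht => ?_, ⟨_, lipschitzWith_detour _ _ _⟩, ?_⟩⟩
  · rw [mem_epigraph_iff_heightAbove_pos]
    refine lt_of_le_of_lt ?_ (heightAbove_detour_gt hΨ' hx hy ht)
    have hmin : 0 ≤ min t (1 - t) := le_min ht.1 (sub_nonneg.2 ht.2)
    positivity
  · simpa only [dist_eq_norm] using integral_detour_le hΨ' hx hy hα.1 hα.2.le
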